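/- arXiv:1901.10387 — 3 statements merged into one kernel-verified Lean document; each statement's English description precedes it below -/
import Mathlib

section
/- If G = (V, E) is a matching-covered, very sparse graph (|E| < |V|/(1−ε) for a constant ε < 1/9) with no vertices of degree 0 or 1, then any maximal set of node-disjoint triads in G has size at least c(ε)·|E| where c(ε) = (1−9ε)/5 > 0. -/
/-- A triad: a set `{a,b,c}` of three vertices of degree 2 with edges `ab` and `bc`. -/
def IsTriad {V : Type*} [Fintype V] [DecidableEq V] (G : SimpleGraph V) [DecidableRel G.Adj]
    (s : Finset V) : Prop :=
  ∃ a b c : V, s = {a, b, c} ∧ a ≠ b ∧ b ≠ c ∧ a ≠ c ∧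
    G.degree a = 2 ∧ G.degree b = 2 ∧ G.degree c = 2 ∧ G.Adj a b ∧ G.Adj b c

private lemma pair_of_card_two' {α : Type*} [DecidableEq α] {s : Finset α} {x : α}
    (h : s.card = 2) (hx : x ∈ s) : ∃ y, s = {x, y} := by
  obtain ⟨a, b, hab, rfl⟩ := Finset.card_eq_two.mp h
  rcases Finset.mem_insert.mp hx with rfl | hx'
  · exact ⟨b, rfl⟩
  · rw [Finset.mem_singleton] at hx'
    subst hx'
    exact ⟨a, Finset.pair_comm a x⟩

private lemma card_five_le {α : Type*} [DecidableEq α] (a b c d e : α) :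
    ({a, b, c, d, e} : Finset α).card ≤ 5 := by
  have h1 := Finset.card_insert_le a ({b, c, d, e} : Finset α)
  have h2 := Finset.card_insert_le b ({c, d, e} : Finset α)
  have h3 := Finset.card_insert_le c ({d, e} : Finset α)
  have h4 := Finset.card_insert_le d ({e} : Finset α)
  have h5 : ({e} : Finset α).card = 1 := Finset.card_singleton e
  omega

/-- If `G` is matching-covered, very sparse (`|E| < |V|/(1-ε)` for a constant
`ε < 1/9`), with no vertices of degree 0 or 1, then any maximal set of node-disjoint triads
has size at least `c(ε) |E|` with `c(ε) = (1 - 9ε)/5 > 0`. -/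
theorem sparse_many_disjoint_triads (ε : ℝ) (hε0 : 0 ≤ ε) (hε : ε < 1 / 9)
    {V : Type*} [Fintype V] [DecidableEq V] (G : SimpleGraph V) [DecidableRel G.Adj]
    (hmc : ∀ e ∈ G.edgeSet, ∃ M : G.Subgraph, M.IsPerfectMatching ∧ e ∈ M.edgeSet)
    (hdeg : ∀ v : V, 2 ≤ G.degree v)
    (hsparse : (G.edgeFinset.card : ℝ) < Fintype.card V / (1 - ε))
    (T : Set (Finset V)) (hT : ∀ s ∈ T, IsTriad G s)
    (hdisj : T.Pairwise fun s t => Disjoint s t)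
    (hmax : ∀ s : Finset V, IsTriad G s → s ∉ T → ∃ t ∈ T, ¬ Disjoint s t) :
    (1 - 9 * ε) / 5 * G.edgeFinset.card ≤ T.ncard := by
  classical
  set n := Fintype.card V with hn_def
  set m := G.edgeFinset.card with hm_def
  set D := Finset.univ.filter (fun v => G.degree v = 2) with hD_def
  set H := Finset.univ.filter (fun v => ¬ G.degree v = 2) with hH_def
  set B := D.filter (fun b => ∀ x ∈ G.neighborFinset b, G.degree x = 2) with hB_def
  have hTfin : T.Finite := Set.toFinite T
  set TF := hTfin.toFinset with hTF_def
  -- Degree sum facts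
  have hsum : ∑ v, G.degree v = 2 * m := G.sum_degrees_eq_twice_card_edges
  have hsplit : (∑ v ∈ D, G.degree v) + (∑ v ∈ H, G.degree v) = 2 * m := by
    rw [← hsum, hD_def, hH_def]
    exact Finset.sum_filter_add_sum_filter_not _ _ _
  have hDsum : ∑ v ∈ D, G.degree v = 2 * D.card := by
    rw [Finset.sum_congr rfl (fun v hv => (Finset.mem_filter.mp hv).2)]
    rw [Finset.sum_const, smul_eq_mul, mul_comm]
  have hHsum : 3 * H.card ≤ ∑ v ∈ H, G.degree v := by
    have : ∑ _v ∈ H, 3 ≤ ∑ v ∈ H, G.degree v := by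
      refine Finset.sum_le_sum (fun v hv => ?_)
      have h2 := hdeg v
      have hne : ¬ G.degree v = 2 := (Finset.mem_filter.mp hv).2
      omega
    simpa [mul_comm] using this
  have hcardDH : D.card + H.card = n := by
    rw [hD_def, hH_def, hn_def]
    simpa using Finset.card_filter_add_card_filter_not
      (s := (Finset.univ : Finset V)) (fun v => G.degree v = 2)
  -- |D \ B| bounded by sum of degrees over H
  have hDBsub : D \ B ⊆ H.biUnion (fun w => G.neighborFinset w) := by
    intro v hv
    obtain ⟨hvD, hvB⟩ := Finset.mem_sdiff.mp hv
    rw [hB_def, Finset.mem_filter] at hvB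
    push_neg at hvB
    obtain ⟨x, hxN, hx2⟩ := hvB hvD
    refine Finset.mem_biUnion.mpr ⟨x, ?_, ?_⟩
    · exact Finset.mem_filter.mpr ⟨Finset.mem_univ x, hx2⟩
    · rw [SimpleGraph.mem_neighborFinset]
      exact ((SimpleGraph.mem_neighborFinset G v x).mp hxN).symm
  have hDBcard : (D \ B).card ≤ ∑ v ∈ H, G.degree v := by
    calc (D \ B).card ≤ (H.biUnion (fun w => G.neighborFinset w)).card :=
          Finset.card_le_card hDBsub
      _ ≤ ∑ v ∈ H, (G.neighborFinset v).card := Finset.card_biUnion_le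
      _ = ∑ v ∈ H, G.degree v := by
          refine Finset.sum_congr rfl (fun v _ => ?_)
          exact G.card_neighborFinset_eq_degree v
  have hBD : (D \ B).card + B.card = D.card :=
    Finset.card_sdiff_add_card_eq_card (Finset.filter_subset _ _)
  -- Every b in B lies in the 5-element closed neighborhood of some t in T
  have hcover : B ⊆ TF.biUnion (fun t => t ∪ t.biUnion (fun w => G.neighborFinset w)) := by
    intro b hb
    obtain ⟨hbD, hnb⟩ := Finset.mem_filter.mp hb
    have hdb : G.degree b = 2 := (Finset.mem_filter.mp hbD).2
    have hcard2 : (G.neighborFinset b).card = 2 := by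
      rw [G.card_neighborFinset_eq_degree]; exact hdb
    obtain ⟨a, c, hac, hN⟩ := Finset.card_eq_two.mp hcard2
    have haN : a ∈ G.neighborFinset b := by rw [hN]; simp
    have hcN : c ∈ G.neighborFinset b := by rw [hN]; simp
    have hba : G.Adj b a := (SimpleGraph.mem_neighborFinset G b a).mp haN
    have hbc : G.Adj b c := (SimpleGraph.mem_neighborFinset G b c).mp hcN
    have htri : IsTriad G ({a, b, c} : Finset V) :=
      ⟨a, b, c, rfl, hba.ne', hbc.ne, hac, hnb a haN, hdb, hnb c hcN, hba.symm, hbc⟩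
    have hbmem : b ∈ ({a, b, c} : Finset V) := by simp
    obtain ⟨t, htT, hndis⟩ : ∃ t ∈ T, ¬ Disjoint ({a, b, c} : Finset V) t := by
      by_cases hsT : ({a, b, c} : Finset V) ∈ T
      · exact ⟨_, hsT, Finset.not_disjoint_iff.mpr ⟨b, hbmem, hbmem⟩⟩
      · exact hmax _ htri hsT
    obtain ⟨w, hws, hwt⟩ := Finset.not_disjoint_iff.mp hndis
    refine Finset.mem_biUnion.mpr ⟨t, hTfin.mem_toFinset.mpr htT, ?_⟩
    rw [Finset.mem_union]
    rcases Finset.mem_insert.mp hws with rfl | hws'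
    · right
      exact Finset.mem_biUnion.mpr ⟨w, hwt,
        (SimpleGraph.mem_neighborFinset G w b).mpr hba.symm⟩
    rcases Finset.mem_insert.mp hws' with rfl | hws''
    · left; exact hwt
    · rw [Finset.mem_singleton] at hws''
      subst hws''
      right
      exact Finset.mem_biUnion.mpr ⟨w, hwt,
        (SimpleGraph.mem_neighborFinset G w b).mpr hbc.symm⟩
  -- each triad's closed neighborhood has at most 5 vertices
  have hF5 : ∀ t ∈ TF, (t ∪ t.biUnion (fun w => G.neighborFinset w)).card ≤ 5 := by
    intro t htTF
    have htT : t ∈ T := hTfin.mem_toFinset.mp htTF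
    obtain ⟨a, b, c, hst, hab, hbc, hac, hda, hdb, hdc, hAab, hAbc⟩ := hT t htT
    have hNa2 : (G.neighborFinset a).card = 2 := by
      rw [G.card_neighborFinset_eq_degree]; exact hda
    have hNb2 : (G.neighborFinset b).card = 2 := by
      rw [G.card_neighborFinset_eq_degree]; exact hdb
    have hNc2 : (G.neighborFinset c).card = 2 := by
      rw [G.card_neighborFinset_eq_degree]; exact hdc
    obtain ⟨a', hNa⟩ := pair_of_card_two' hNa2
      ((SimpleGraph.mem_neighborFinset G a b).mpr hAab)
    obtain ⟨c', hNc⟩ := pair_of_card_two' hNc2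
      ((SimpleGraph.mem_neighborFinset G c b).mpr hAbc.symm)
    have hNb : G.neighborFinset b = {a, c} := by
      refine (Finset.eq_of_subset_of_card_le ?_ ?_).symm
      · intro x hx
        rcases Finset.mem_insert.mp hx with rfl | hx'
        · exact (SimpleGraph.mem_neighborFinset G b x).mpr hAab.symm
        · rw [Finset.mem_singleton] at hx'
          subst hx'
          exact (SimpleGraph.mem_neighborFinset G b x).mpr hAbc
      · rw [hNb2, Finset.card_pair hac]
    have hsub : t ∪ t.biUnion (fun w => G.neighborFinset w) ⊆
        ({a, b, c, a', c'} : Finset V) := by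
      intro x hx
      rcases Finset.mem_union.mp hx with hx1 | hx2
      · rw [hst] at hx1
        simp only [Finset.mem_insert, Finset.mem_singleton] at hx1 ⊢
        tauto
      · obtain ⟨w, hwt, hxw⟩ := Finset.mem_biUnion.mp hx2
        rw [hst] at hwt
        simp only [Finset.mem_insert, Finset.mem_singleton] at hwt
        rcases hwt with rfl | rfl | rfl
        · rw [hNa] at hxw
          simp only [Finset.mem_insert, Finset.mem_singleton] at hxw ⊢
          tauto
        · rw [hNb] at hxw
          simp only [Finset.mem_insert, Finset.mem_singleton] at hxw ⊢
          tauto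
        · rw [hNc] at hxw
          simp only [Finset.mem_insert, Finset.mem_singleton] at hxw ⊢
          tauto
    exact le_trans (Finset.card_le_card hsub) (card_five_le a b c a' c')
  -- |B| ≤ 5 |TF|
  have hB5T : B.card ≤ 5 * TF.card := by
    calc B.card ≤ (TF.biUnion (fun t => t ∪ t.biUnion (fun w => G.neighborFinset w))).card :=
          Finset.card_le_card hcover
      _ ≤ ∑ t ∈ TF, (t ∪ t.biUnion (fun w => G.neighborFinset w)).card :=
          Finset.card_biUnion_le
      _ ≤ ∑ _t ∈ TF, 5 := Finset.sum_le_sum hF5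
      _ = 5 * TF.card := by rw [Finset.sum_const, smul_eq_mul, mul_comm]
  -- Final real arithmetic
  have hncard : T.ncard = TF.card := Set.ncard_eq_toFinset_card T hTfin
  have h1ε : (0 : ℝ) < 1 - ε := by linarith
  have hnm : (m : ℝ) * (1 - ε) < n := (lt_div_iff₀ h1ε).mp hsparse
  rw [hncard]
  have r1 : ((∑ v ∈ D, G.degree v : ℕ) : ℝ) + ((∑ v ∈ H, G.degree v : ℕ) : ℝ) = 2 * m := by
    exact_mod_cast hsplit
  have r2 : ((∑ v ∈ D, G.degree v : ℕ) : ℝ) = 2 * D.card := by exact_mod_cast hDsum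
  have r3 : 3 * (H.card : ℝ) ≤ ((∑ v ∈ H, G.degree v : ℕ) : ℝ) := by exact_mod_cast hHsum
  have r4 : (D.card : ℝ) + H.card = n := by exact_mod_cast hcardDH
  have r5 : ((D \ B).card : ℝ) ≤ ((∑ v ∈ H, G.degree v : ℕ) : ℝ) := by exact_mod_cast hDBcard
  have r6 : ((D \ B).card : ℝ) + B.card = D.card := by exact_mod_cast hBD
  have r7 : (B.card : ℝ) ≤ 5 * TF.card := by exact_mod_cast hB5T
  nlinarith [r1, r2, r3, r4, r5, r6, r7, hnm]
end

section
/- Given vectors v₁, …, vₖ ∈ ℤᵐ, each nonzero with coordinates bounded in absolute value by 2 and with k ≤ m, there exists a weight vector w ∈ {0, 1, …, N}ᵐ with N polynomially bounded in m such that ⟨w, vᵢ⟩ ≠ 0 for all i; moreover there is an explicit family W of at most poly(m) such weight vectors (independent of the vᵢ) one of which works. -/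
/-- Fenner–Gurjar–Thierauf weight family: There are constants `C, d` and an
explicit family `W m` of weight vectors in `{0, 1, …, C(m+1)^d}^m`, of size at most
`C(m+1)^d`, such that for any `k ≤ m` nonzero integer vectors `v₁, …, vₖ ∈ ℤ^m` with
entries bounded in absolute value by 2, some `w ∈ W m` satisfies `⟨w, vᵢ⟩ ≠ 0` for all
`i`. -/
theorem isolating_weight_family :
    ∃ (C d : ℕ) (W : (m : ℕ) → Finset (Fin m → ℕ)),
      (∀ m, (W m).card ≤ C * (m + 1) ^ d) ∧
      (∀ m, ∀ w ∈ W m, ∀ j : Fin m, w j ≤ C * (m + 1) ^ d) ∧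
      ∀ (m k : ℕ) (v : Fin k → Fin m → ℤ), k ≤ m →
        (∀ i, v i ≠ 0) → (∀ i j, |v i j| ≤ 2) →
        ∃ w ∈ W m, ∀ i, (∑ j, (w j : ℤ) * v i j) ≠ 0 := by
  refine ⟨4, 4, fun m =>
    ((Finset.Icc 1 (2*(m+1)^2)) ×ˢ (Finset.range (2*(m+1)^2))).image
      (fun pt => fun j : Fin m => pt.2 ^ (j : ℕ) % pt.1), ?_, ?_, ?_⟩
  · intro m
    refine le_trans Finset.card_image_le ?_
    rw [Finset.card_product, Nat.card_Icc, Finset.card_range]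
    simp only [Nat.add_sub_cancel]
    exact le_of_eq (by ring)
  · intro m w hw j
    simp only [Finset.mem_image, Finset.mem_product, Finset.mem_Icc, Finset.mem_range] at hw
    obtain ⟨⟨p, t⟩, ⟨⟨hp1, hpN⟩, _⟩, rfl⟩ := hw
    have : t ^ (j : ℕ) % p < p := Nat.mod_lt _ hp1
    nlinarith [this, hpN, sq_nonneg (m+1)]
  · intro m k v hkm hv hvb
    rcases Nat.eq_zero_or_pos m with rfl | hm
    · -- k = 0
      interval_cases k
      refine ⟨fun j => 0 ^ (j : ℕ) % 1, ?_, fun i => i.elim0⟩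
      simp only [Finset.mem_image, Finset.mem_product, Finset.mem_Icc, Finset.mem_range]
      exact ⟨(1, 0), ⟨⟨le_refl 1, by norm_num⟩, by norm_num⟩, rfl⟩
    -- m ≥ 1; pick a prime p with m^2 + 2 < p ≤ 2m^2 + 4
    obtain ⟨p, hp, hplb, hpub⟩ := Nat.exists_prime_lt_and_le_two_mul (m^2 + 2) (by positivity)
    haveI : Fact p.Prime := ⟨hp⟩
    have hpN : p ≤ 2 * (m + 1)^2 := by nlinarith
    -- polynomials over ZMod p
    set Q : Fin k → Polynomial (ZMod p) :=
      fun i => ∑ j : Fin m, Polynomial.C ((v i j : ZMod p)) * Polynomial.X ^ (j : ℕ) with hQ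
    have hcoeff : ∀ i (j : Fin m), (Q i).coeff (j : ℕ) = (v i j : ZMod p) := by
      intro i j
      rw [hQ]
      simp only [Polynomial.finset_sum_coeff, Polynomial.coeff_C_mul, Polynomial.coeff_X_pow]
      rw [Finset.sum_eq_single j]
      · simp
      · intro b _ hb
        simp only [Fin.val_eq_val]
        rw [if_neg (fun h => hb h.symm), mul_zero]
      · simp
    have hcast_ne : ∀ i (j : Fin m), v i j ≠ 0 → (v i j : ZMod p) ≠ 0 := by
      intro i j hne h0
      rw [ZMod.intCast_zmod_eq_zero_iff_dvd] at h0
      have := Int.le_of_dvd (abs_pos.mpr hne) ((dvd_abs _ _).mpr h0)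
      have h2 := hvb i j
      have : (p : ℤ) ≤ 2 := le_trans this h2
      have : (4 : ℤ) ≤ (p:ℤ) := by exact_mod_cast le_trans (by nlinarith [hm] : 4 ≤ m^2 + 3) (by omega : m^2 + 3 ≤ p)
      omega
    have hQne : ∀ i, Q i ≠ 0 := by
      intro i h0
      obtain ⟨j, hj⟩ := Function.ne_iff.mp (hv i)
      have := hcoeff i j
      rw [h0] at this
      simp at this
      exact hcast_ne i j hj this.symm
    have hdeg : ∀ i, (Q i).natDegree ≤ m - 1 := by
      intro i
      refine Polynomial.natDegree_sum_le_of_forall_le _ _ (fun j _ => ?_)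
      refine le_trans (Polynomial.natDegree_mul_le) ?_
      simp only [Polynomial.natDegree_C, Polynomial.natDegree_X_pow, zero_add]
      omega
    set bad : Finset (ZMod p) :=
      Finset.univ.biUnion (fun i : Fin k => (Q i).roots.toFinset) with hbad
    have hbadcard : bad.card < p := by
      have h1 : bad.card ≤ ∑ i : Fin k, ((Q i).roots.toFinset).card :=
        Finset.card_biUnion_le
      have h2 : ∀ i : Fin k, ((Q i).roots.toFinset).card ≤ m - 1 := by
        intro i
        refine le_trans (Multiset.toFinset_card_le _) ?_
        exact le_trans (Polynomial.card_roots' _) (hdeg i)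
      have h3 : bad.card ≤ k * (m - 1) := by
        refine le_trans h1 (le_trans (Finset.sum_le_sum (fun i _ => h2 i)) ?_)
        simp [Finset.sum_const, mul_comm]
      have : k * (m - 1) < p := by
        calc k * (m - 1) ≤ m * (m - 1) := Nat.mul_le_mul_right _ hkm
        _ < m ^ 2 + 2 := by nlinarith [Nat.sub_le m 1]
        _ < p := hplb
      omega
    obtain ⟨x, hx⟩ : ∃ x : ZMod p, x ∉ bad := by
      by_contra h
      push_neg at h
      have : bad = Finset.univ := Finset.eq_univ_of_forall h
      rw [this, Finset.card_univ, ZMod.card] at hbadcard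
      omega
    refine ⟨fun j => x.val ^ (j : ℕ) % p, ?_, ?_⟩
    · rw [Finset.mem_image]
      refine ⟨(p, x.val), ?_, rfl⟩
      rw [Finset.mem_product]
      exact ⟨Finset.mem_Icc.mpr ⟨hp.one_lt.le, hpN⟩,
        Finset.mem_range.mpr (lt_of_lt_of_le (ZMod.val_lt x) hpN)⟩
    · intro i hcontra
      have heval : (Q i).eval x ≠ 0 := by
        intro h0
        apply hx
        rw [hbad]
        simp only [Finset.mem_biUnion, Finset.mem_univ, Multiset.mem_toFinset, true_and]
        exact ⟨i, (Polynomial.mem_roots (hQne i)).mpr h0⟩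
      apply heval
      have := congrArg (Int.cast : ℤ → ZMod p) hcontra
      push_cast at this
      rw [hQ]
      simp only [Polynomial.eval_finset_sum, Polynomial.eval_mul, Polynomial.eval_C,
        Polynomial.eval_pow, Polynomial.eval_X]
      rw [← this]
      refine Finset.sum_congr rfl (fun j _ => ?_)
      rw [ZMod.natCast_val, ZMod.cast_id]
      ring
end

section
/- Let G = (V, E) be a graph whose every edge lies in a minimum-weight perfect matching (w.r.t. weights w), let C be a connected component of G, and let S ⊆ C be an odd set tight for the face PM[w] (every minimum-weight perfect matching has exactly one edge in δ(S)). Then the induced subgraph on S is connected. -/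
/-- A perfect matching of `G`, given as a finite set of edges. -/
def IsPM {V : Type*} [Fintype V] [DecidableEq V] (G : SimpleGraph V) [DecidableRel G.Adj]
    (M : Finset (Sym2 V)) : Prop :=
  M ⊆ G.edgeFinset ∧ ∀ v : V, (M.filter fun e => v ∈ e).card = 1

/-- The total weight of a set of edges. -/
def mweight {V : Type*} (w : Sym2 V → ℤ) (M : Finset (Sym2 V)) : ℤ := ∑ e ∈ M, w e

/-- A minimum-weight perfect matching. -/
def MinPM {V : Type*} [Fintype V] [DecidableEq V] (G : SimpleGraph V) [DecidableRel G.Adj]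
    (w : Sym2 V → ℤ) (M : Finset (Sym2 V)) : Prop :=
  IsPM G M ∧ ∀ N, IsPM G N → mweight w M ≤ mweight w N

/-- An edge crosses `S` if exactly one of its endpoints lies in `S`. -/
def Crosses {V : Type*} (S : Finset V) (e : Sym2 V) : Prop :=
  ∃ u v : V, e = s(u, v) ∧ u ∈ S ∧ v ∉ S

lemma even_invol {α : Type*} [DecidableEq α] (f : α → α) (T : Finset α)
    (h1 : ∀ x ∈ T, f x ∈ T) (h2 : ∀ x ∈ T, f (f x) = x) (h3 : ∀ x ∈ T, f x ≠ x) :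
    Even T.card := by
  induction T using Finset.strongInduction with
  | _ T ih =>
    rcases T.eq_empty_or_nonempty with rfl | ⟨x, hx⟩
    · simp
    · have hfx : f x ∈ T := h1 x hx
      have hfxx : f x ≠ x := h3 x hx
      set T' := (T.erase x).erase (f x) with hT'
      have hsub : T' ⊂ T := by
        refine HasSubset.Subset.ssubset_of_ne ?_ ?_
        · intro y hy
          exact Finset.mem_of_mem_erase (Finset.mem_of_mem_erase hy)
        · intro h
          have : x ∈ T' := h ▸ hx
          simp [hT'] at this
      have hmem : ∀ y ∈ T', y ∈ T ∧ y ≠ x ∧ y ≠ f x := by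
        intro y hy
        simp only [hT', Finset.mem_erase] at hy
        exact ⟨hy.2.2, hy.2.1, hy.1⟩
      have h1' : ∀ y ∈ T', f y ∈ T' := by
        intro y hy
        obtain ⟨hyT, hyx, hyfx⟩ := hmem y hy
        simp only [hT', Finset.mem_erase]
        refine ⟨?_, ?_, h1 y hyT⟩
        · intro h; exact hyx (by rw [← h2 y hyT, h, h2 x hx])
        · intro h; exact hyfx (by rw [← h2 y hyT, h])
      have heven : Even T'.card :=
        ih T' hsub (fun y hy => h1' y hy) (fun y hy => h2 y (hmem y hy).1)
          (fun y hy => h3 y (hmem y hy).1)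
      have hcard : T.card = T'.card + 2 := by
        have h1c : (T.erase x).card = T.card - 1 := Finset.card_erase_of_mem hx
        have hfx' : f x ∈ T.erase x := Finset.mem_erase.mpr ⟨hfxx, hfx⟩
        have h2c : T'.card = (T.erase x).card - 1 := Finset.card_erase_of_mem hfx'
        have hpos2 : 2 ≤ T.card := by
          have : 1 ≤ (T.erase x).card := Finset.card_pos.mpr ⟨f x, hfx'⟩
          have : 1 ≤ T.card := Finset.card_pos.mpr ⟨x, hx⟩
          have : 1 ≤ (T.erase x).card := Finset.card_pos.mpr ⟨f x, hfx'⟩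
          omega
        omega
      rw [hcard]
      exact heven.add even_two

lemma key_parity {V : Type*} [Fintype V] [DecidableEq V] (G : SimpleGraph V)
    [DecidableRel G.Adj] (M : Finset (Sym2 V)) (hM : IsPM G M) (S T : Finset V)
    (hTS : T ⊆ S) (a b : V) (he0 : s(a,b) ∈ M) (hb : b ∉ S)
    (huniq : ∀ e ∈ M, Crosses S e → e = s(a,b))
    (hclosed : ∀ u ∈ T, ∀ z ∈ S, G.Adj u z → z ∈ T) :
    Even ((T.erase a).card) := by
  have hpm : ∀ v : V, ∃ x, s(v,x) ∈ M ∧ ∀ e ∈ M, v ∈ e → e = s(v,x) := by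
    intro v
    obtain ⟨e, he⟩ := Finset.card_eq_one.mp (hM.2 v)
    have hmem : e ∈ M.filter (fun e => v ∈ e) := he ▸ Finset.mem_singleton_self e
    rw [Finset.mem_filter] at hmem
    obtain ⟨x, rfl⟩ := Sym2.mem_iff_exists.mp hmem.2
    exact ⟨x, hmem.1, fun e' he' hv' => by
      have h : e' ∈ M.filter (fun e => v ∈ e) := Finset.mem_filter.mpr ⟨he', hv'⟩
      rw [he, Finset.mem_singleton] at h; exact h⟩
  choose p hpM hpu using hpm
  have hadj : ∀ v, G.Adj v (p v) := fun v => by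
    have := hM.1 (hpM v)
    rwa [SimpleGraph.mem_edgeFinset, SimpleGraph.mem_edgeSet] at this
  have hne : ∀ v, p v ≠ v := fun v => (hadj v).ne'
  have hinv : ∀ v, p (p v) = v := by
    intro v
    have h := hpu (p v) _ (hpM v) (Sym2.mem_mk_right v (p v))
    rw [Sym2.eq_iff] at h
    rcases h with ⟨h1, _⟩ | ⟨h1, _⟩
    · exact absurd h1.symm (hne v)
    · exact h1.symm
  have hstay : ∀ v ∈ S, v ≠ a → p v ∈ S := by
    intro v hv hva
    by_contra hpv
    have hcr : Crosses S s(v, p v) := ⟨v, p v, rfl, hv, hpv⟩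
    have h := huniq _ (hpM v) hcr
    rw [Sym2.eq_iff] at h
    rcases h with ⟨h1, _⟩ | ⟨h1, _⟩
    · exact hva h1
    · exact hb (h1 ▸ hv)
  have hnota : ∀ v ∈ S, v ≠ a → p v ≠ a := by
    intro v hv hva hcon
    have h1 : s(v, p v) = s(a, p a) := hpu a _ (hpM v) (hcon ▸ Sym2.mem_mk_right v (p v))
    have h2 : s(a, b) = s(a, p a) := hpu a _ he0 (Sym2.mem_mk_left a b)
    have h3 : s(v, p v) = s(a, b) := h1.trans h2.symm
    rw [Sym2.eq_iff] at h3
    rcases h3 with ⟨hx, _⟩ | ⟨hx, _⟩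
    · exact hva hx
    · exact hb (hx ▸ hv)
  apply even_invol p
  · intro x hx
    rw [Finset.mem_erase] at hx ⊢
    obtain ⟨hxa, hxT⟩ := hx
    have hxS := hTS hxT
    exact ⟨hnota x hxS hxa, hclosed x hxT _ (hstay x hxS hxa) (hadj x)⟩
  · intro x _; exact hinv x
  · intro x _; exact hne x

/-- Suppose every edge of `G` lies in a minimum-weight perfect matching, `S`
is an odd set contained in a single connected component of `G`, and `S` is tight (every
minimum-weight perfect matching has exactly one edge in `δ(S)`).  Then the subgraph
induced on `S` is connected. -/
theorem tight_odd_set_connected {V : Type*} [Fintype V] [DecidableEq V]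
    (G : SimpleGraph V) [DecidableRel G.Adj] (w : Sym2 V → ℤ)
    (hcov : ∀ e ∈ G.edgeFinset, ∃ M, MinPM G w M ∧ e ∈ M)
    (S : Finset V) (hodd : Odd S.card)
    (C : G.ConnectedComponent) (hSC : ∀ v ∈ S, G.connectedComponentMk v = C)
    (htight : ∀ M, MinPM G w M → {e : Sym2 V | e ∈ M ∧ Crosses S e}.ncard = 1) :
    (SimpleGraph.induce (↑S : Set V) G).Connected := by
  classical
  have hS0 : S.Nonempty := by
    rcases hodd with ⟨k, hk⟩; exact Finset.card_pos.mp (by omega)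
  haveI hne : Nonempty ↑(↑S : Set V) := ⟨⟨hS0.choose, hS0.choose_spec⟩⟩
  by_cases hcard : S.card = 1
  · obtain ⟨v, rfl⟩ := Finset.card_eq_one.mp hcard
    refine ⟨fun x y => ?_⟩
    have hxy : x = y := by
      apply Subtype.ext
      have hx := x.2; have hy := y.2
      simp only [Finset.coe_singleton, Set.mem_singleton_iff] at hx hy
      rw [hx, hy]
    rw [hxy]
  · have h3 : 1 < S.card := by rcases hodd with ⟨k, hk⟩; omega
    obtain ⟨x, hx, y, hy, hxy⟩ := Finset.one_lt_card.mp h3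
    have hreach : G.Reachable x y :=
      SimpleGraph.ConnectedComponent.eq.mp ((hSC x hx).trans (hSC y hy).symm)
    obtain ⟨wlk⟩ := hreach
    obtain ⟨d0, _, _, _⟩ := wlk.exists_boundary_dart ({x} : Set V) rfl
      (fun h => hxy (Set.mem_singleton_iff.mp h).symm)
    have hedge : s(d0.fst, d0.snd) ∈ G.edgeFinset := by
      rw [SimpleGraph.mem_edgeFinset, SimpleGraph.mem_edgeSet]; exact d0.adj
    obtain ⟨M, hMmin, _⟩ := hcov _ hedge
    obtain ⟨e0, he0set⟩ := Set.ncard_eq_one.mp (htight M hMmin)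
    have hm : e0 ∈ {e : Sym2 V | e ∈ M ∧ Crosses S e} := by
      rw [he0set]; exact Set.mem_singleton _
    obtain ⟨he0M, a, b, he0ab, haS, hbS⟩ := hm
    subst he0ab
    have huniqM : ∀ e ∈ M, Crosses S e → e = s(a, b) := by
      intro e heM hc
      have h1 : e ∈ ({s(a,b)} : Set (Sym2 V)) :=
        he0set ▸ (⟨heM, hc⟩ : e ∈ {e : Sym2 V | e ∈ M ∧ Crosses S e})
      rwa [Set.mem_singleton_iff] at h1
    have key : ∀ z, ∀ hz : z ∈ S,
        (SimpleGraph.induce (↑S : Set V) G).Reachable ⟨a, haS⟩ ⟨z, hz⟩ := by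
      intro z hz
      by_contra hnr
      set T : Finset V := S.filter
        (fun u => ∃ hu : u ∈ S,
          (SimpleGraph.induce (↑S : Set V) G).Reachable ⟨z, hz⟩ ⟨u, hu⟩) with hT
      have hTS : T ⊆ S := Finset.filter_subset _ _
      have hzT : z ∈ T := Finset.mem_filter.mpr ⟨hz, hz, SimpleGraph.Reachable.refl _⟩
      have hclosed : ∀ u ∈ T, ∀ v ∈ S, G.Adj u v → v ∈ T := by
        intro u hu v hv hadj
        obtain ⟨huS, hu', hr⟩ := Finset.mem_filter.mp hu
        refine Finset.mem_filter.mpr ⟨hv, hv, hr.trans ?_⟩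
        exact (show (SimpleGraph.induce (↑S : Set V) G).Adj ⟨u, hu'⟩ ⟨v, hv⟩ from hadj).reachable
      have haT : a ∉ T := by
        intro hmem
        obtain ⟨_, ha', hr⟩ := Finset.mem_filter.mp hmem
        exact hnr hr.symm
      have hevenT : Even T.card := by
        have h := key_parity G M hMmin.1 S T hTS a b he0M hbS huniqM hclosed
        rwa [Finset.erase_eq_of_notMem haT] at h
      have hra : G.Reachable z a :=
        SimpleGraph.ConnectedComponent.eq.mp ((hSC z hz).trans (hSC a haS).symm)
      obtain ⟨wlk2⟩ := hra
      obtain ⟨d, _, hd1, hd2⟩ := wlk2.exists_boundary_dart (↑T : Set V)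
        (by exact_mod_cast hzT) (by exact_mod_cast haT)
      have hdT : d.fst ∈ T := hd1
      have hdnT : d.snd ∉ T := hd2
      have hdS : d.fst ∈ S := hTS hdT
      have hdz : d.snd ∉ S := fun hin => hdnT (hclosed _ hdT _ hin d.adj)
      have hedge2 : s(d.fst, d.snd) ∈ G.edgeFinset := by
        rw [SimpleGraph.mem_edgeFinset, SimpleGraph.mem_edgeSet]; exact d.adj
      obtain ⟨M', hM'min, hM'mem⟩ := hcov _ hedge2
      obtain ⟨e1, he1set⟩ := Set.ncard_eq_one.mp (htight M' hM'min)
      have huniq' : ∀ e ∈ M', Crosses S e → e = s(d.fst, d.snd) := by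
        intro e heM hc
        have h1 : e ∈ ({e1} : Set (Sym2 V)) :=
          he1set ▸ (⟨heM, hc⟩ : e ∈ {e : Sym2 V | e ∈ M' ∧ Crosses S e})
        have h2 : s(d.fst, d.snd) ∈ ({e1} : Set (Sym2 V)) :=
          he1set ▸ (⟨hM'mem, ⟨d.fst, d.snd, rfl, hdS, hdz⟩⟩ :
            s(d.fst, d.snd) ∈ {e : Sym2 V | e ∈ M' ∧ Crosses S e})
        rw [Set.mem_singleton_iff] at h1 h2
        rw [h1, h2]
      have hodd' := key_parity G M' hM'min.1 S T hTS d.fst d.snd hM'mem hdz huniq' hclosed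
      have hoddT : Odd T.card := by
        rw [Finset.card_erase_of_mem hdT] at hodd'
        have h1 : 1 ≤ T.card := Finset.card_pos.mpr ⟨z, hzT⟩
        rcases hodd' with ⟨k, hk⟩; exact ⟨k, by omega⟩
      rcases hevenT with ⟨m, hm⟩; rcases hoddT with ⟨k, hk⟩; omega
    refine ⟨fun u v => ?_⟩
    obtain ⟨u, hu⟩ := u; obtain ⟨v, hv⟩ := v
    exact (key u hu).symm.trans (key v hv)
end
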